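/- arXiv:2008.08455 — 4 statements merged into one kernel-verified Lean document; each statement's English description precedes it below -/
import Mathlib

section
/- For every finite group G, the non-nilpotent graph of G is connected: for any x, y ∈ G such that ⟨x,u⟩ is not nilpotent for some u ∈ G and ⟨y,v⟩ is not nilpotent for some v ∈ G, there exist elements z₀ = x, z₁, …, z_n = y of G such that ⟨z_i, z_{i+1}⟩ is not nilpotent for every 0 ≤ i < n. -/
/-!
In a nilpotent group elements of coprime order commute, and commuting elements `a`, `t` of
coprime order both lie in `⟨a * t⟩`. Hence, writing `~` for adjacency, if `s ~ a`, `t ~ q` and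
`a`, `t` have coprime orders, then `s ~ a ~ t ~ q` or `s ~ a * t ~ q`.

Every vertex `x` has a neighbour of prime power order: split a neighbour `u` into its `p`-part
`v` and `p'`-part `w`; if `⟨x, v⟩` and `⟨x, w⟩` were both nilpotent, splitting `x` the same way
would put `x` and `u` into the product of two commuting nilpotent subgroups. Applying this twice
yields an edge between elements of prime power orders, and an edge between two `p`-elements
`a`, `b` forces an edge between elements of coprime orders, since otherwise every `p'`-element of
`⟨a, b⟩` is central and `⟨a, b⟩` is nilpotent modulo its centre. Fix one edge `α ~ β` with
coprime orders: a neighbour of `x` of prime power order is coprime to `α` or to `β`, so every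
vertex is joined to `α`.
-/

universe u

open Subgroup
open scoped commutatorElement

theorem Nat.Coprime.prime_pow_coprime_or {p m n : ℕ} (hp : p.Prime) (k : ℕ)
    (hmn : m.Coprime n) : (p ^ k).Coprime m ∨ (p ^ k).Coprime n := by
  by_cases hm : p ∣ m
  · refine .inr (hp.coprime_pow_of_not_dvd fun hn => hp.ne_one ?_).symm
    exact Nat.eq_one_of_dvd_coprimes hmn hm hn
  · exact .inl (hp.coprime_pow_of_not_dvd hm).symm

section Nilpotent

variable {G : Type*} [Group G]

theorem Subgroup.closure_pair_le {a b : G} {K : Subgroup G} (ha : a ∈ K) (hb : b ∈ K) :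
    closure {a, b} ≤ K :=
  (closure_le K).mpr (Set.insert_subset ha (Set.singleton_subset_iff.mpr hb))

theorem Subgroup.isNilpotent_of_le {H K : Subgroup G} (hHK : H ≤ K)
    (hK : Group.IsNilpotent K) : Group.IsNilpotent H :=
  Group.nilpotent_of_mulEquiv (subgroupOfEquivOfLe hHK)

theorem Subgroup.isNilpotent_sup {H K : Subgroup G} [Group.IsNilpotent H]
    [Group.IsNilpotent K] (hHK : ∀ x ∈ H, ∀ y ∈ K, Commute x y) :
    Group.IsNilpotent ↥(H ⊔ K) := by
  let φ := MonoidHom.noncommCoprod H.subtype K.subtype fun x y => hHK x x.2 y y.2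
  have hφ : φ.range = H ⊔ K := by
    refine (MonoidHom.noncommCoprod_range _ _ _).trans ?_
    rw [range_subtype, range_subtype]
  rw [← hφ]
  exact Group.nilpotent_of_surjective φ.rangeRestrict φ.rangeRestrict_surjective

theorem Subgroup.commute_of_mem_closure_right {x : G} {t : Set G}
    (h : ∀ y ∈ t, Commute x y) {y : G} (hy : y ∈ closure t) : Commute x y := by
  have hx : x ∈ centralizer (closure t) := by
    rw [centralizer_closure, mem_centralizer_iff]
    exact fun y hy => (h y hy).eq.symm
  exact (mem_centralizer_iff.mp hx y hy).symm

theorem Subgroup.commute_of_mem_closure {s t : Set G} (hst : ∀ x ∈ s, ∀ y ∈ t, Commute x y)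
    {x y : G} (hx : x ∈ closure s) (hy : y ∈ closure t) : Commute x y :=
  commute_of_mem_closure_right (fun y' hy' =>
    (commute_of_mem_closure_right (fun x' hx' => (hst x' hx' y' hy').symm) hx).symm) hy

theorem commute_of_mem_zpowers {g a b : G} (ha : a ∈ zpowers g) (hb : b ∈ zpowers g) :
    Commute a b := by
  obtain ⟨i, rfl⟩ := ha
  obtain ⟨j, rfl⟩ := hb
  exact Commute.zpow_zpow_self g i j

theorem commutatorElement_pow_orderOf_right {a b : G} (hz : ⁅a, b⁆ ∈ center G) :
    ⁅a, b⁆ ^ orderOf b = 1 := by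
  have hconj : a * b * a⁻¹ = ⁅a, b⁆ * b := by rw [commutatorElement_def]; group
  have h : (a * b * a⁻¹) ^ orderOf b = 1 := by
    rw [conj_pow, pow_orderOf_eq_one, mul_one, mul_inv_cancel]
  rwa [hconj, (show Commute b ⁅a, b⁆ from mem_center_iff.mp hz b).symm.mul_pow,
    pow_orderOf_eq_one, mul_one] at h

theorem commutatorElement_eq_one_of_coprime {a b : G} (hz : ⁅a, b⁆ ∈ center G)
    (hab : (orderOf a).Coprime (orderOf b)) : ⁅a, b⁆ = 1 := by
  have hb := commutatorElement_pow_orderOf_right hz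
  have ha : ⁅a, b⁆ ^ orderOf a = 1 := by
    rw [← inv_inj, ← inv_pow, commutatorElement_inv, inv_one]
    exact commutatorElement_pow_orderOf_right (commutatorElement_inv a b ▸ inv_mem hz)
  exact orderOf_eq_one_iff.mp <|
    Nat.eq_one_of_dvd_coprimes hab (orderOf_dvd_of_pow_eq_one ha) (orderOf_dvd_of_pow_eq_one hb)

theorem Group.IsNilpotent.commute_of_coprime [Group.IsNilpotent G] {a b : G}
    (hab : (orderOf a).Coprime (orderOf b)) : Commute a b := by
  refine Group.nilpotent_center_quotient_ind
    (P := fun G _ _ => ∀ a b : G, (orderOf a).Coprime (orderOf b) → Commute a b) G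
    (fun _ _ _ a b _ => Subsingleton.elim _ _) ?_ a b hab
  intro G _ _ ih a b hab
  let π := QuotientGroup.mk' (center G)
  have hπ : Commute (π a) (π b) :=
    ih _ _ (Nat.Coprime.of_dvd (orderOf_map_dvd π a) (orderOf_map_dvd π b) hab)
  have hz : ⁅a, b⁆ ∈ center G := by
    rw [← QuotientGroup.ker_mk' (center G), MonoidHom.mem_ker, map_commutatorElement]
    exact commutatorElement_eq_one_iff_commute.mpr hπ
  exact commutatorElement_eq_one_iff_commute.mp (commutatorElement_eq_one_of_coprime hz hab)

theorem Subgroup.commute_of_coprime {K : Subgroup G} (hK : Group.IsNilpotent K) {a b : G}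
    (ha : a ∈ K) (hb : b ∈ K) (hab : (orderOf a).Coprime (orderOf b)) : Commute a b :=
  (Group.IsNilpotent.commute_of_coprime (a := (⟨a, ha⟩ : K)) (b := ⟨b, hb⟩)
    (by simpa only [orderOf_mk] using hab)).map K.subtype

theorem Commute.left_mem_zpowers_mul {a b : G} (hab : Commute a b)
    (h : (orderOf a).Coprime (orderOf b)) : a ∈ zpowers (a * b) := by
  obtain ⟨m, hm⟩ := exists_pow_eq_self_of_coprime h.symm
  have key : ((a * b) ^ orderOf b) ^ m = a := by
    rw [hab.mul_pow, pow_orderOf_eq_one, mul_one, hm]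
  have h := pow_mem (pow_mem (mem_zpowers (a * b)) (orderOf b)) m
  rwa [key] at h

theorem IsOfFinOrder.exists_primePow_mul_not_dvd {x : G} (hx : IsOfFinOrder x) {p : ℕ}
    (hp : p.Prime) : ∃ v ∈ zpowers x, ∃ w ∈ zpowers x,
      v * w = x ∧ (∃ k, orderOf v = p ^ k) ∧ ¬ p ∣ orderOf w := by
  obtain ⟨e, m, hpm, hxm⟩ := Nat.exists_eq_pow_mul_and_not_dvd hx.orderOf_pos.ne' p hp.ne_one
  obtain ⟨A, B, hAB⟩ :=
    Nat.isCoprime_iff_coprime.mpr (hp.coprime_pow_of_not_dvd (m := e) hpm).symm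
  have hpow : ∀ n : ℤ, (x ^ (n * m)) ^ p ^ e = 1 ∧ (x ^ (n * p ^ e)) ^ m = 1 := fun n => by
    simp only [← zpow_natCast, ← zpow_mul, orderOf_dvd_iff_zpow_eq_one.symm, hxm]
    exact ⟨⟨n, by push_cast; ring⟩, ⟨n, by push_cast; ring⟩⟩
  refine ⟨x ^ (B * m), zpow_mem (mem_zpowers x) _, x ^ (A * p ^ e), zpow_mem (mem_zpowers x) _,
    ?_, ?_, ?_⟩
  · rw [← zpow_add, add_comm, ← Nat.cast_pow, hAB, zpow_one]
  · obtain ⟨k, -, hk⟩ := (Nat.dvd_prime_pow hp).mp (orderOf_dvd_of_pow_eq_one (hpow B).1)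
    exact ⟨k, hk⟩
  · exact fun hpw => hpm (hpw.trans (orderOf_dvd_of_pow_eq_one (hpow A).2))

theorem isNilpotent_of_forall_not_dvd_mem_center {H : Type*} [Group H] [Finite H] {p : ℕ}
    (hp : p.Prime) (h : ∀ k : H, ¬ p ∣ orderOf k → k ∈ center H) : Group.IsNilpotent H := by
  have : Fact p.Prime := ⟨hp⟩
  refine Group.of_quotient_center_nilpotent (IsPGroup.isNilpotent (p := p) fun g => ?_)
  obtain ⟨k, rfl⟩ := QuotientGroup.mk_surjective g
  obtain ⟨v, -, w, -, rfl, ⟨i, hv⟩, hw⟩ :=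
    (isOfFinOrder_of_finite k).exists_primePow_mul_not_dvd hp
  refine ⟨i, ?_⟩
  rw [QuotientGroup.mk_mul, (QuotientGroup.eq_one_iff w).mpr (h w hw), mul_one,
    ← QuotientGroup.mk_pow, ← hv, pow_orderOf_eq_one, QuotientGroup.mk_one]

theorem isNilpotent_closure_pair_mul {p : ℕ} (hp : p.Prime) {x v w : G} (hx : IsOfFinOrder x)
    (hvw : Commute v w) (hv : ∃ k, orderOf v = p ^ k) (hw : ¬ p ∣ orderOf w)
    (hxv : Group.IsNilpotent (closure {x, v})) (hxw : Group.IsNilpotent (closure {x, w})) :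
    Group.IsNilpotent (closure {x, v * w}) := by
  obtain ⟨x₁, hx₁, x₂, hx₂, hx, ⟨k, hk⟩, hpx₂⟩ := hx.exists_primePow_mul_not_dvd hp
  obtain ⟨i, hi⟩ := hv
  have hxv_le : zpowers x ≤ closure {x, v} := zpowers_le.mpr (subset_closure (by simp))
  have hxw_le : zpowers x ≤ closure {x, w} := zpowers_le.mpr (subset_closure (by simp))
  have hx₁w : Commute x₁ w := commute_of_coprime hxw (hxw_le hx₁) (subset_closure (by simp))
    (hk ▸ (hp.coprime_pow_of_not_dvd hw).symm)
  have hvx₂ : Commute v x₂ := commute_of_coprime hxv (subset_closure (by simp)) (hxv_le hx₂)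
    (hi ▸ (hp.coprime_pow_of_not_dvd hpx₂).symm)
  have : Group.IsNilpotent (closure {x₁, v}) :=
    isNilpotent_of_le (closure_pair_le (hxv_le hx₁) (subset_closure (by simp))) hxv
  have : Group.IsNilpotent (closure {x₂, w}) :=
    isNilpotent_of_le (closure_pair_le (hxw_le hx₂) (subset_closure (by simp))) hxw
  have hsup := isNilpotent_sup fun a ha b hb =>
    commute_of_mem_closure (s := {x₁, v}) (t := {x₂, w})
      (by simp [commute_of_mem_zpowers hx₁ hx₂, hx₁w, hvx₂, hvw]) ha hb
  refine isNilpotent_of_le (closure_pair_le ?_ ?_) hsup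
  · exact hx ▸ mul_mem (mem_sup_left (subset_closure (by simp)))
      (mem_sup_right (subset_closure (by simp)))
  · exact mul_mem (mem_sup_left (subset_closure (by simp)))
      (mem_sup_right (subset_closure (by simp)))

end Nilpotent

def nonNilpotentGraph (G : Type*) [Group G] : SimpleGraph G where
  Adj g h := ¬ Group.IsNilpotent (closure {g, h})
  symm := ⟨fun g h hgh => by rwa [Set.pair_comm]⟩
  loopless := ⟨fun g hg => hg <| by
    rw [Set.pair_eq_singleton, ← zpowers_eq_closure]
    open scoped IsMulCommutative in infer_instance⟩

namespace nonNilpotentGraph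

variable {G : Type*} [Group G]

local notation "Γ" => nonNilpotentGraph

theorem adj_of_mem_closure {a b c d : G} (hab : (Γ G).Adj a b)
    (ha : a ∈ closure {c, d}) (hb : b ∈ closure {c, d}) : (Γ G).Adj c d :=
  fun hcd => hab (isNilpotent_of_le (closure_pair_le ha hb) hcd)

theorem not_adj_one (g : G) : ¬ (Γ G).Adj g 1 :=
  fun h => (Γ G).loopless.irrefl g (adj_of_mem_closure h (subset_closure (by simp)) (one_mem _))

theorem reachable_of_coprime {s a t q : G} (hsa : (Γ G).Adj s a) (htq : (Γ G).Adj t q)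
    (hat : (orderOf a).Coprime (orderOf t)) : (Γ G).Reachable s q := by
  by_cases hat' : (Γ G).Adj a t
  · exact hsa.reachable.trans (hat'.reachable.trans htq.reachable)
  have hcomm := commute_of_coprime (not_not.mp hat') (subset_closure (by simp))
    (subset_closure (by simp)) hat
  have ha := hcomm.left_mem_zpowers_mul hat
  have ht : t ∈ zpowers (a * t) := hcomm.eq ▸ hcomm.symm.left_mem_zpowers_mul hat.symm
  have hs : (Γ G).Adj s (a * t) := adj_of_mem_closure hsa (subset_closure (by simp))
    (zpowers_le.mpr (subset_closure (by simp)) ha)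
  have hq : (Γ G).Adj (a * t) q := adj_of_mem_closure htq
    (zpowers_le.mpr (subset_closure (by simp)) ht) (subset_closure (by simp))
  exact hs.reachable.trans hq.reachable

theorem exists_adj_primePow [Finite G] {x u : G} (h : (Γ G).Adj x u) :
    ∃ b, (∃ p k, p.Prime ∧ orderOf b = p ^ k) ∧ (Γ G).Adj x b := by
  induction hn : orderOf u using Nat.strong_induction_on generalizing u with
  | _ n ih =>
  have hu : orderOf u ≠ 1 := fun h1 => not_adj_one x (orderOf_eq_one_iff.mp h1 ▸ h)
  obtain ⟨p, hp, hpu⟩ := Nat.exists_prime_and_dvd hu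
  obtain ⟨v, hv, w, hw, hvw, ⟨k, hvk⟩, hpw⟩ :=
    (isOfFinOrder_of_finite u).exists_primePow_mul_not_dvd hp
  by_cases hxv : (Γ G).Adj x v
  · exact ⟨v, ⟨p, k, hp, hvk⟩, hxv⟩
  by_cases hxw : (Γ G).Adj x w
  · have hwu : orderOf w < orderOf u := lt_of_le_of_ne
      (Nat.le_of_dvd (orderOf_pos u) (orderOf_dvd_of_mem_zpowers hw)) fun h => hpw (h ▸ hpu)
    exact ih _ (hn ▸ hwu) hxw rfl
  refine absurd ?_ h
  exact hvw ▸ isNilpotent_closure_pair_mul hp (isOfFinOrder_of_finite x)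
    (commute_of_mem_zpowers hv hw) ⟨k, hvk⟩ hpw (not_not.mp hxv) (not_not.mp hxw)

theorem exists_adj_coprime_of_primePow [Finite G] {p i j : ℕ} (hp : p.Prime) {a b : G}
    (ha : orderOf a = p ^ i) (hb : orderOf b = p ^ j) (hab : (Γ G).Adj a b) :
    ∃ α β : G, (orderOf α).Coprime (orderOf β) ∧ (Γ G).Adj α β := by
  by_contra! hcop
  have hcomm : ∀ c : G, ¬ p ∣ orderOf c → ∀ g ∈ ({a, b} : Set G), Commute c g := by
    intro c hc g hg
    have hcg : (orderOf c).Coprime (orderOf g) := by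
      rcases hg with rfl | rfl
      · exact ha ▸ hp.coprime_pow_of_not_dvd hc
      · exact hb ▸ hp.coprime_pow_of_not_dvd hc
    exact commute_of_coprime (not_not.mp (hcop _ _ hcg)) (subset_closure (by simp))
      (subset_closure (by simp)) hcg
  refine hab (isNilpotent_of_forall_not_dvd_mem_center hp fun c hc =>
    mem_center_iff.mpr fun g => ?_)
  rw [← orderOf_coe] at hc
  exact Subtype.ext (commute_of_mem_closure_right (hcomm c hc) g.2).eq.symm

theorem exists_adj_coprime [Finite G] {x u : G} (h : (Γ G).Adj x u) :
    ∃ α β : G, (orderOf α).Coprime (orderOf β) ∧ (Γ G).Adj α β := by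
  obtain ⟨b, ⟨p, j, hp, hb⟩, hxb⟩ := exists_adj_primePow h
  obtain ⟨a, ⟨q, i, hq, ha⟩, hba⟩ := exists_adj_primePow hxb.symm
  by_cases hba' : (orderOf b).Coprime (orderOf a)
  · exact ⟨b, a, hba', hba⟩
  obtain rfl : p = q := by
    by_contra hpq
    exact hba' (hb ▸ ha ▸ Nat.coprime_pow_primes j i hp hq hpq)
  exact exists_adj_coprime_of_primePow hp hb ha hba

theorem reachable_of_adj_coprime [Finite G] {x u α β : G} (hxu : (Γ G).Adj x u)
    (hαβ : (orderOf α).Coprime (orderOf β)) (hadj : (Γ G).Adj α β) : (Γ G).Reachable x α := by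
  obtain ⟨b, ⟨p, k, hp, hb⟩, hxb⟩ := exists_adj_primePow hxu
  rcases hαβ.prime_pow_coprime_or hp k with hbα | hbβ
  · exact (reachable_of_coprime hxb hadj (hb ▸ hbα)).trans hadj.symm.reachable
  · exact reachable_of_coprime hxb hadj.symm (hb ▸ hbβ)

end nonNilpotentGraph

theorem non_nilpotent_graph_connected (G : Type u) [Group G] [Finite G]
    (x y : G)
    (hx : ∃ u : G, ¬ Group.IsNilpotent ↥(Subgroup.closure {x, u}))
    (hy : ∃ v : G, ¬ Group.IsNilpotent ↥(Subgroup.closure {y, v})) :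
    ∃ (n : ℕ) (z : Fin (n + 1) → G), z 0 = x ∧ z (Fin.last n) = y ∧
      ∀ i : Fin n, ¬ Group.IsNilpotent ↥(Subgroup.closure {z i.castSucc, z i.succ}) := by
  obtain ⟨u, hu⟩ := hx
  obtain ⟨v, hv⟩ := hy
  obtain ⟨α, β, hαβ, hadj⟩ := nonNilpotentGraph.exists_adj_coprime hu
  obtain ⟨w⟩ := (nonNilpotentGraph.reachable_of_adj_coprime hu hαβ hadj).trans
    (nonNilpotentGraph.reachable_of_adj_coprime hv hαβ hadj).symm
  exact ⟨w.length, fun i => w.getVert i, w.getVert_zero, w.getVert_length,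
    fun i => w.adj_getVert_succ i.isLt⟩
end

section
/- There exists a finite soluble group G, with a normal subgroup N, such that: N is elementary abelian of order 25 (abelian of order 25 with every nontrivial element of order 5), N is the unique minimal normal subgroup of G, the quotient G/N is isomorphic to the quaternion group Q₈, G is not supersoluble, every proper subgroup of G is supersoluble, and for every nontrivial normal subgroup M of G the quotient G/M is supersoluble (i.e. G is strongly critical for the class 𝔘 of finite supersoluble groups and G/soc(G) ≅ Q₈ is not cyclic). -/
/-!
`G` is the affine group `𝔽₅² ⋊ Q₈` for a faithful irreducible action of `Q₈` on `N = 𝔽₅²`.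
Faithfulness makes `N` self-centralising and irreducibility leaves no invariant line, so every
nontrivial normal subgroup contains `N`: `N` is the unique minimal normal subgroup, every proper
quotient is a quotient of `Q₈` (a `2`-group, hence supersoluble), and `G` is not supersoluble
because the first nontrivial term of a supersoluble series would be a cyclic normal subgroup,
containing the non-cyclic `N`. A proper subgroup `H` either meets `N` trivially and embeds in
`Q₈`, or its image in `Q₈` is proper, hence cyclic, say `⟨ρ⟩`; an eigenline of `ρ` inside `N ∩ H`
then gives the series `1 ≤ line ≤ N ∩ H ≤ H` with cyclic factors.
-/

universe u

/-- The factor group `B / A` is cyclic, for subgroups `A ≤ B` of an ambient group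
with `A` normal in the ambient group. -/
def CyclicFactor {X : Type u} [Group X] (A B : Subgroup X) (hA : A.Normal) : Prop :=
  letI : (A.subgroupOf B).Normal := hA.subgroupOf B
  IsCyclic (↥B ⧸ A.subgroupOf B)

/-- `X` is supersoluble: there is a chain `1 = H₀ ≤ H₁ ≤ … ≤ H_k = X` of subgroups,
each normal in `X`, with all factors `H_i / H_{i-1}` cyclic. -/
def IsSupersoluble (X : Type u) [Group X] : Prop :=
  ∃ (k : ℕ) (H : Fin (k + 1) → Subgroup X) (hnorm : ∀ i, (H i).Normal),
    H 0 = ⊥ ∧ H (Fin.last k) = ⊤ ∧ (∀ i : Fin k, H i.castSucc ≤ H i.succ) ∧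
    ∀ i : Fin k, CyclicFactor (H i.castSucc) (H i.succ) (hnorm i.castSucc)

/-- `N` is a minimal normal subgroup of `G`. -/
def IsMinNormal {G : Type u} [Group G] (N : Subgroup G) : Prop :=
  N.Normal ∧ N ≠ ⊥ ∧ ∀ M : Subgroup G, M.Normal → M ≤ N → M = ⊥ ∨ M = N

open Subgroup

section Supersoluble

variable {X : Type u} [Group X]

lemma isCyclic_quotient_iff (K : Subgroup X) [K.Normal] :
    IsCyclic (X ⧸ K) ↔ ∃ g : X, ∀ x : X, ∃ k : ℤ, (g ^ k)⁻¹ * x ∈ K := by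
  constructor
  · rintro ⟨g', hg'⟩
    obtain ⟨g, rfl⟩ := QuotientGroup.mk_surjective g'
    refine ⟨g, fun y => ?_⟩
    obtain ⟨k, hk⟩ := hg' (y : X ⧸ K)
    exact ⟨k, QuotientGroup.eq.mp (by simpa using hk)⟩
  · rintro ⟨g, hg⟩
    refine ⟨⟨g, fun x => ?_⟩⟩
    obtain ⟨y, rfl⟩ := QuotientGroup.mk_surjective x
    obtain ⟨k, hk⟩ := hg y
    exact ⟨k, by simpa using QuotientGroup.eq.mpr hk⟩

lemma cyclicFactor_iff {A B : Subgroup X} (hA : A.Normal) :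
    CyclicFactor A B hA ↔ ∃ g ∈ B, ∀ b ∈ B, ∃ k : ℤ, (g ^ k)⁻¹ * b ∈ A := by
  let := hA.subgroupOf B
  simp only [CyclicFactor, isCyclic_quotient_iff, mem_subgroupOf, Subtype.forall, Subtype.exists,
    coe_mul, coe_inv, coe_zpow, exists_prop]

lemma cyclicFactor_iff_isCyclic_of_eq_bot {A B : Subgroup X} (hA : A.Normal) (hA0 : A = ⊥) :
    CyclicFactor A B hA ↔ IsCyclic B := by
  subst hA0
  exact ((QuotientGroup.quotientMulEquivOfEq (bot_subgroupOf B)).trans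
    QuotientGroup.quotientBot).isCyclic

lemma cyclicFactor_top {K : Subgroup X} (hK : K.Normal) (h : IsCyclic (X ⧸ K)) :
    CyclicFactor K ⊤ hK := by
  obtain ⟨g, hg⟩ := (isCyclic_quotient_iff K).mp h
  exact (cyclicFactor_iff hK).mpr ⟨g, mem_top g, fun b _ => hg b⟩

lemma cyclicFactor_of_card_dvd [Finite X] {p : ℕ} [Fact p.Prime] {A B : Subgroup X}
    (hA : A.Normal) (hAB : A ≤ B) (h : Nat.card B ∣ p * Nat.card A) : CyclicFactor A B hA := by
  let := hA.subgroupOf B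
  refine isCyclic_of_card_dvd_prime (p := p)
    (Nat.dvd_of_mul_dvd_mul_right (Nat.card_pos (α := A.subgroupOf B)) ?_)
  rwa [← card_eq_card_quotient_mul_card_subgroup, Nat.card_congr (subgroupOfEquivOfLe hAB).toEquiv]

lemma CyclicFactor.comap {Y : Type u} [Group Y] (f : X →* Y) (hf : Function.Surjective f)
    {A B : Subgroup Y} {hA : A.Normal} (h : CyclicFactor A B hA) :
    CyclicFactor (A.comap f) (B.comap f) (hA.comap f) := by
  obtain ⟨g, hgB, hg⟩ := (cyclicFactor_iff hA).mp h
  obtain ⟨g, rfl⟩ := hf g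
  refine (cyclicFactor_iff _).mpr ⟨g, hgB, fun b hb => ?_⟩
  obtain ⟨k, hk⟩ := hg (f b) hb
  exact ⟨k, by simpa using hk⟩

lemma isSupersoluble_of_subsingleton [Subsingleton X] : IsSupersoluble X :=
  ⟨0, fun _ => ⊥, fun _ => normal_bot, rfl, Subsingleton.elim _ _, finZeroElim, finZeroElim⟩

lemma isSupersoluble_of_normal_series {A B : Subgroup X} (hA : A.Normal) (hB : B.Normal)
    (hAB : A ≤ B) (hAc : IsCyclic A) (hBA : CyclicFactor A B hA) (hXB : IsCyclic (X ⧸ B)) :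
    IsSupersoluble X := by
  have hnorm : ∀ i, (![⊥, A, B, ⊤] i).Normal := by
    intro i; fin_cases i
    exacts [normal_bot, hA, hB, normal_top]
  refine ⟨3, ![⊥, A, B, ⊤], hnorm, rfl, rfl, ?_, ?_⟩
  · intro i; fin_cases i
    exacts [bot_le, hAB, le_top]
  · intro i; fin_cases i
    exacts [(cyclicFactor_iff_isCyclic_of_eq_bot _ rfl).mpr hAc, hBA, cyclicFactor_top hB hXB]

lemma isSupersoluble_of_isCyclic_of_isSupersoluble_quotient {C : Subgroup X} [C.Normal]
    (hC : IsCyclic C) (h : IsSupersoluble (X ⧸ C)) : IsSupersoluble X := by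
  obtain ⟨k, K, hK, hK0, hKk, hKmono, hKcyc⟩ := h
  let mk := QuotientGroup.mk' C
  let H : Fin (k + 2) → Subgroup X := Fin.cons ⊥ fun j => (K j).comap mk
  have hH : ∀ i, (H i).Normal := Fin.cases normal_bot fun j => (hK j).comap mk
  have hH1 : H 1 = C := by
    change (K 0).comap mk = C
    rw [hK0, MonoidHom.comap_bot, QuotientGroup.ker_mk']
  refine ⟨k + 1, H, hH, rfl, ?_, Fin.cases bot_le fun j => comap_mono (hKmono j), ?_⟩
  · rw [← Fin.succ_last]
    exact (congrArg _ hKk).trans (comap_top mk)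
  · refine Fin.cases ?_ fun j => ?_
    · exact (cyclicFactor_iff_isCyclic_of_eq_bot _ rfl).mpr (hH1 ▸ hC)
    · exact (hKcyc j).comap mk (QuotientGroup.mk'_surjective C)

lemma zpowers_normal_of_mem_center {x : X} (hx : x ∈ center X) : (zpowers x).Normal :=
  ⟨fun n hn g => by
    rw [mem_center_iff.mp (zpowers_le.mpr hx hn) g, mul_inv_cancel_right]
    exact hn⟩

theorem IsPGroup.isSupersoluble [Finite X] {p : ℕ} [Fact p.Prime] (hX : IsPGroup p X) :
    IsSupersoluble X := by
  induction h : Nat.card X using Nat.strong_induction_on generalizing X with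
  | _ n ih =>
    rcases subsingleton_or_nontrivial X with _ | _
    · exact isSupersoluble_of_subsingleton
    have := hX.center_nontrivial
    obtain ⟨⟨x, hx⟩, hx1⟩ := exists_ne (1 : center X)
    have : (zpowers x).Normal := zpowers_normal_of_mem_center hx
    refine isSupersoluble_of_isCyclic_of_isSupersoluble_quotient (C := zpowers x) inferInstance
      (ih _ ?_ (hX.to_quotient _) rfl)
    have hne : zpowers x ≠ ⊥ := by simpa [zpowers_eq_bot] using hx1
    rw [← h, card_eq_card_quotient_mul_card_subgroup (zpowers x)]
    exact lt_mul_of_one_lt_right Nat.card_pos ((one_lt_card_iff_ne_bot _).mpr hne)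

lemma IsSupersoluble.exists_isCyclic_normal [Nontrivial X] (h : IsSupersoluble X) :
    ∃ C : Subgroup X, C.Normal ∧ C ≠ ⊥ ∧ IsCyclic C := by
  obtain ⟨k, H, hH, hH0, hHk, -, hcyc⟩ := h
  by_contra! hC
  have hbot : ∀ i, H i = ⊥ := by
    refine Fin.induction hH0 fun i hi => ?_
    by_contra hne
    exact hC _ (hH _) hne ((cyclicFactor_iff_isCyclic_of_eq_bot _ hi).mp (hcyc i))
  exact top_ne_bot (hHk ▸ hbot (Fin.last k))

end Supersoluble

lemma Multiplicative.ofAdd_mem_zpowers_ofAdd_iff {n : ℕ} {M : Type*} [AddCommGroup M]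
    [Module (ZMod n) M] {v w : M} :
    Multiplicative.ofAdd w ∈ zpowers (Multiplicative.ofAdd v) ↔ ∃ t : ZMod n, w = t • v := by
  simp only [mem_zpowers_iff, ← ofAdd_zsmul, EmbeddingLike.apply_eq_iff_eq]
  constructor
  · rintro ⟨k, rfl⟩
    exact ⟨k, (Int.cast_smul_eq_zsmul (ZMod n) k v).symm⟩
  · rintro ⟨t, rfl⟩
    exact ⟨ZMod.cast t, by rw [← Int.cast_smul_eq_zsmul (ZMod n), ZMod.intCast_zmod_cast]⟩

namespace Q8OnF5Sq

open QuaternionGroup SemidirectProduct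

abbrev Q8 := QuaternionGroup 2

abbrev W := ZMod 5 × ZMod 5

/-- `a 1 ↦ diag(2, 3)` and `xa 0 ↦ [[0, -1], [1, 0]]`, a faithful irreducible representation
of `Q₈` on `𝔽₅²` (`2` has order `4` in `𝔽₅ˣ`, and `xa k = xa 0 * a k`). -/
def act (q : Q8) (v : W) : W :=
  match q with
  | a k => (2 ^ k.val * v.1, 3 ^ k.val * v.2)
  | xa k => (-(3 ^ k.val * v.2), 2 ^ k.val * v.1)

lemma act_mul : ∀ (q r : Q8) (v : W), act (q * r) v = act q (act r v) := by decide
lemma act_one : ∀ v : W, act 1 v = v := by decide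
lemma eq_one_of_act_eq_self : ∀ q : Q8, (∀ v : W, act q v = v) → q = 1 := by decide
lemma exists_eigenvector : ∀ q : Q8, ∃ c : W, c ≠ 0 ∧ ∃ t : ZMod 5, act q c = t • c := by decide
lemma not_common_eigenvector :
    ∀ c : W, c ≠ 0 → ∀ s t : ZMod 5, act (a 1) c = s • c → act (xa 0) c ≠ t • c := by decide
lemma sq_eq_one : ∀ q : Q8, q ^ 2 = 1 → q = 1 ∨ q = a 2 := by decide
lemma pow_four : ∀ q : Q8, q ^ 4 = 1 := by decide

lemma act_add (q : Q8) (v w : W) : act q (v + w) = act q v + act q w := by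
  cases q <;> ext <;> simp only [act, Prod.fst_add, Prod.snd_add] <;> ring

abbrev V := Multiplicative W

def rep : Q8 →* MulAut V where
  toFun q :=
    { toFun := fun v => .ofAdd (act q v.toAdd)
      invFun := fun v => .ofAdd (act q⁻¹ v.toAdd)
      left_inv := fun v => by simp [← act_mul, act_one]
      right_inv := fun v => by simp [← act_mul, act_one]
      map_mul' := fun v w => act_add q _ _ }
  map_one' := MulEquiv.ext fun v => congrArg Multiplicative.ofAdd (act_one v.toAdd)
  map_mul' := fun q r => MulEquiv.ext fun v => congrArg Multiplicative.ofAdd (act_mul q r v.toAdd)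

abbrev G := V ⋊[rep] Q8

instance : Finite G := .of_equiv _ equivProd.symm

abbrev N : Subgroup G := (inl : V →* G).range

lemma N_eq_ker : N = (rightHom : G →* Q8).ker := range_inl_eq_ker_rightHom

instance : N.Normal := N_eq_ker ▸ MonoidHom.normal_ker _

lemma mem_N_iff {g : G} : g ∈ N ↔ g.right = 1 := by
  rw [N_eq_ker]; rfl

lemma conj_inl (g : G) (v : V) : g * inl v * g⁻¹ = inl (rep g.right v) := by
  conv_lhs => rw [← inl_left_mul_inr_right g]
  rw [inl_aut]
  ext <;> simp [mul_comm]

lemma card_V : Nat.card V = 25 := by simp [Nat.card_eq_fintype_card]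

lemma pow_five_V : ∀ v : V, v ^ 5 = 1 := by decide

lemma card_N : Nat.card N = 25 :=
  (Nat.card_congr (MonoidHom.ofInjective inl_injective).toEquiv).symm.trans card_V

instance : Fact (Nat.Prime 5) := ⟨Nat.prime_five⟩

lemma eq_bot_or_eq_top_or_card_eq_five (S : Subgroup V) : S = ⊥ ∨ S = ⊤ ∨ Nat.card S = 5 := by
  have : Nat.card S ∣ 5 ^ 2 := by simpa [card_V] using card_subgroup_dvd_card S
  obtain ⟨i, hi, hS⟩ := (Nat.dvd_prime_pow Nat.prime_five).mp this
  interval_cases i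
  · exact Or.inl (eq_bot_of_card_eq S hS)
  · exact Or.inr (Or.inr hS)
  · exact Or.inr (Or.inl (eq_top_of_card_eq S (hS.trans card_V.symm)))

lemma orderOf_eq_five {v : V} (hv : v ≠ 1) : orderOf v = 5 := orderOf_eq_prime (pow_five_V v) hv

lemma eq_zpowers_of_card_eq_five {S : Subgroup V} (hS : Nat.card S = 5) {v : V} (hv : v ∈ S)
    (hv1 : v ≠ 1) : S = zpowers v :=
  (eq_of_le_of_card_ge (zpowers_le.mpr hv) (by rw [hS, Nat.card_zpowers, orderOf_eq_five hv1])).symm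

lemma rep_mem_zpowers_iff {q : Q8} {c : W} :
    rep q (.ofAdd c) ∈ zpowers (.ofAdd c) ↔ ∃ t : ZMod 5, act q c = t • c :=
  Multiplicative.ofAdd_mem_zpowers_ofAdd_iff

def IsInvariant (R : Subgroup Q8) (S : Subgroup V) : Prop := ∀ q ∈ R, ∀ v ∈ S, rep q v ∈ S

lemma isInvariant_zpowers {ρ : Q8} {S : Subgroup V} (h : ∀ v ∈ S, rep ρ v ∈ S) :
    IsInvariant (zpowers ρ) S := by
  intro q hq
  obtain ⟨n, rfl⟩ := mem_powers_iff_mem_zpowers.mpr hq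
  clear hq
  induction n with
  | zero => simp
  | succ n ih => exact fun v hv => by simpa [pow_succ] using ih _ (h v hv)

lemma eq_top_of_isInvariant_top {S : Subgroup V} (hS : IsInvariant ⊤ S) (hne : S ≠ ⊥) :
    S = ⊤ := by
  rcases eq_bot_or_eq_top_or_card_eq_five S with h | h | h
  · exact absurd h hne
  · exact h
  obtain ⟨v, hv, hv1⟩ := S.bot_or_exists_ne_one.resolve_left hne
  rw [eq_zpowers_of_card_eq_five h hv hv1] at hS
  obtain ⟨s, hs⟩ := rep_mem_zpowers_iff.mp (hS (a 1) (mem_top _) v (mem_zpowers v))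
  obtain ⟨t, ht⟩ := rep_mem_zpowers_iff.mp (hS (xa 0) (mem_top _) v (mem_zpowers v))
  exact absurd ht (not_common_eigenvector _ hv1 s t hs)

lemma isInvariant_map_rightHom_comap_inl (H : Subgroup G) :
    IsInvariant (H.map rightHom) (H.comap inl) := by
  rintro _ ⟨h, hh, rfl⟩ v hv
  change inl (rep h.right v) ∈ H
  rw [← conj_inl]
  exact mul_mem (mul_mem hh hv) (inv_mem hh)

lemma disjoint_N_of_comap_inl_eq_bot {H : Subgroup G} (hS : H.comap inl = ⊥) : Disjoint N H := by
  rw [disjoint_def]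
  rintro _ ⟨v, rfl⟩ hv
  rw [show v = 1 from (mem_bot.mp (hS ▸ hv : v ∈ (⊥ : Subgroup V))), map_one]

lemma N_le_of_normal {M : Subgroup G} [hM : M.Normal] (hne : M ≠ ⊥) : N ≤ M := by
  by_cases hS : M.comap inl = ⊥
  · refine absurd (eq_bot_iff.mpr fun m hm => ?_) hne
    have hdisj := disjoint_N_of_comap_inl_eq_bot hS
    -- a normal subgroup meeting `N` trivially centralises it, and `Q₈` acts faithfully
    have hfix (w : W) : act m.right w = w := by
      have hc := commute_of_normal_of_disjoint M N hM inferInstance hdisj.symm m (inl (.ofAdd w))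
        hm ⟨_, rfl⟩
      have := (conj_inl m (.ofAdd w)).symm.trans (by rw [hc.eq, mul_inv_cancel_right])
      exact congrArg Multiplicative.toAdd (inl_injective this)
    exact hdisj.le_bot ⟨mem_N_iff.mpr (eq_one_of_act_eq_self _ hfix), hm⟩
  · have htop := eq_top_of_isInvariant_top (fun q _ v hv => by
      rw [mem_comap, inl_aut, map_inv]
      exact hM.conj_mem _ hv _) hS
    rintro _ ⟨v, rfl⟩
    exact (htop ▸ mem_top v : v ∈ M.comap inl)

lemma pow_five_N (n : N) : n ^ 5 = 1 := by
  obtain ⟨_, v, rfl⟩ := n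
  exact Subtype.ext (by simp [← map_pow, pow_five_V])

instance : Nontrivial G := inl_injective.nontrivial

lemma not_isSupersoluble : ¬ IsSupersoluble G := fun h => by
  obtain ⟨C, _, hne, _⟩ := h.exists_isCyclic_normal
  have := isCyclic_of_le (N_le_of_normal hne)
  obtain ⟨n, hn⟩ := IsCyclic.exists_ofOrder_eq_natCard (α := N)
  have := Nat.le_of_dvd (by norm_num) (card_N ▸ hn ▸ orderOf_dvd_of_pow_eq_one (pow_five_N n))
  omega

lemma isPGroup_Q8 : IsPGroup 2 Q8 := fun q => ⟨2, pow_four q⟩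

lemma card_Q8 : Nat.card Q8 = 8 := by rw [Nat.card_eq_fintype_card, QuaternionGroup.card]

lemma isCyclic_of_ne_top {R : Subgroup Q8} (hR : R ≠ ⊤) : IsCyclic R := by
  have hdvd : Nat.card R ∣ 8 := card_Q8 ▸ card_subgroup_dvd_card R
  obtain ⟨i, hi, hRi⟩ := (Nat.dvd_prime_pow (m := 3) Nat.prime_two).mp hdvd
  interval_cases i
  · exact isCyclic_of_card_dvd_prime (p := 2) (by simp [hRi])
  · exact isCyclic_of_card_dvd_prime (p := 2) (by simp [hRi])
  · -- an element outside `{1, a 2}` has order `4 = |R|`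
    obtain ⟨r, hr, hr'⟩ :=
      Set.exists_mem_notMem_of_ncard_lt_ncard (s := ({1, a 2} : Set Q8)) (t := R)
        (by rw [← Nat.card_coe_set_eq (R : Set Q8), SetLike.coe_sort_coe, hRi]
            exact (Set.ncard_insert_le _ _).trans_lt (by simp))
    have hr4 : orderOf r = 2 ^ 2 := orderOf_eq_prime_pow (n := 1)
      (fun h => hr' (by simpa using sq_eq_one r h)) (pow_four r)
    exact isCyclic_of_orderOf_eq_card ⟨r, hr⟩ (by rw [orderOf_mk, hr4, hRi])
  · exact absurd (eq_top_of_card_eq R (by rw [hRi, card_Q8]; rfl)) hR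

lemma isSupersoluble_of_comap_inl_eq_bot {H : Subgroup G} (hS : H.comap inl = ⊥) :
    IsSupersoluble H := by
  have hinj : Function.Injective (rightHom.domRestrict H) := by
    rw [← MonoidHom.ker_eq_bot_iff, MonoidHom.ker_domRestrict, ← N_eq_ker, subgroupOf_eq_bot]
    exact disjoint_N_of_comap_inl_eq_bot hS
  exact (isPGroup_Q8.of_injective _ hinj).isSupersoluble

lemma map_rightHom_ne_top {H : Subgroup G} (hH : H ≠ ⊤) (hS : H.comap inl ≠ ⊥) :
    H.map rightHom ≠ ⊤ := by
  intro hR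
  have hSV := eq_top_of_isInvariant_top (hR ▸ isInvariant_map_rightHom_comap_inl H) hS
  have hNH : N ≤ H := by
    rintro _ ⟨v, rfl⟩
    exact (hSV ▸ mem_top v : v ∈ H.comap inl)
  have := comap_map_eq rightHom H
  rw [hR, comap_top, ← N_eq_ker, sup_eq_left.mpr hNH] at this
  exact hH this.symm

lemma isCyclic_quotient_subgroupOf_N {H : Subgroup G} (hR : IsCyclic (H.map rightHom)) :
    IsCyclic (H ⧸ N.subgroupOf H) := by
  have e := (QuotientGroup.quotientMulEquivOfEq (M := N.subgroupOf H)
    (by rw [MonoidHom.ker_domRestrict, N_eq_ker])).trans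
    (QuotientGroup.quotientKerEquivRange (rightHom.domRestrict H))
  rw [e.isCyclic, MonoidHom.domRestrict_range]
  exact hR

lemma exists_eigenvector_mem {ρ : Q8} {S : Subgroup V} (hS : ∀ v ∈ S, rep ρ v ∈ S)
    (hne : S ≠ ⊥) : ∃ c : W, c ≠ 0 ∧ .ofAdd c ∈ S ∧ ∃ t : ZMod 5, act ρ c = t • c := by
  rcases eq_bot_or_eq_top_or_card_eq_five S with h | h | h
  · exact absurd h hne
  · obtain ⟨c, hc, hρc⟩ := exists_eigenvector ρ
    exact ⟨c, hc, h ▸ mem_top _, hρc⟩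
  · obtain ⟨v, hv, hv1⟩ := S.bot_or_exists_ne_one.resolve_left hne
    refine ⟨v.toAdd, hv1, hv, rep_mem_zpowers_iff.mp ?_⟩
    exact eq_zpowers_of_card_eq_five h hv hv1 ▸ hS v hv

lemma isSupersoluble_of_comap_inl_ne_bot {H : Subgroup G} (hH : H ≠ ⊤) (hS : H.comap inl ≠ ⊥) :
    IsSupersoluble H := by
  have hR : IsCyclic (H.map rightHom) := isCyclic_of_ne_top (map_rightHom_ne_top hH hS)
  obtain ⟨ρ, hρ⟩ := (H.map rightHom).isCyclic_iff_exists_zpowers_eq_top.mp hR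
  obtain ⟨c, hc, hcH, t, hct⟩ := exists_eigenvector_mem
    (isInvariant_map_rightHom_comap_inl H ρ (hρ ▸ mem_zpowers ρ)) hS
  set L := zpowers (Multiplicative.ofAdd c)
  have hL : IsInvariant (H.map rightHom) L := hρ ▸ isInvariant_zpowers fun v hv =>
    (zpowers_le (H := L.comap (rep ρ).toMonoidHom)).mpr (rep_mem_zpowers_iff.mpr ⟨t, hct⟩) hv
  have hLH : L.map inl ≤ H := map_le_iff_le_comap.mpr (zpowers_le.mpr hcH)
  have hA : ((L.map inl).subgroupOf H).Normal := ⟨fun n hn h => by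
    obtain ⟨v, hv, hvn⟩ := mem_subgroupOf.mp hn
    rw [mem_subgroupOf, coe_mul, coe_mul, coe_inv, ← hvn, conj_inl]
    exact mem_map_of_mem _ (hL _ (mem_map_of_mem _ h.2) v hv)⟩
  have hcardA : Nat.card ((L.map inl).subgroupOf H) = 5 := by
    rw [Nat.card_congr (subgroupOfEquivOfLe hLH).toEquiv,
      card_map_of_injective inl_injective, Nat.card_zpowers]
    exact orderOf_eq_five hc
  have hAB := subgroupOf_mono H (map_le_range inl L)
  refine isSupersoluble_of_normal_series hA inferInstance hAB (isCyclic_of_prime_card hcardA)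
    (cyclicFactor_of_card_dvd (p := 5) hA hAB ?_)
    (isCyclic_quotient_subgroupOf_N hR)
  rw [hcardA, ← inf_subgroupOf_right, Nat.card_congr (subgroupOfEquivOfLe inf_le_right).toEquiv]
  exact (card_dvd_of_le inf_le_left).trans card_N.dvd

lemma isSupersoluble_of_ne_top {H : Subgroup G} (hH : H ≠ ⊤) : IsSupersoluble H := by
  by_cases hS : H.comap inl = ⊥
  · exact isSupersoluble_of_comap_inl_eq_bot hS
  · exact isSupersoluble_of_comap_inl_ne_bot hH hS

lemma isSupersoluble_quotient {M : Subgroup G} [M.Normal] (hne : M ≠ ⊥) :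
    IsSupersoluble (G ⧸ M) := by
  refine IsPGroup.isSupersoluble (p := 2) fun x => ?_
  obtain ⟨g, rfl⟩ := QuotientGroup.mk_surjective x
  refine ⟨2, (QuotientGroup.eq_one_iff _).mpr (N_le_of_normal hne (mem_N_iff.mpr ?_))⟩
  exact (map_pow rightHom g _).trans (pow_four _)

lemma isMinNormal_N : IsMinNormal N :=
  ⟨inferInstance, fun h => by simpa [h] using card_N,
    fun M _ hMN => or_iff_not_imp_left.mpr fun hne => le_antisymm hMN (N_le_of_normal hne)⟩

lemma eq_N_of_isMinNormal {M : Subgroup G} (hM : IsMinNormal M) : M = N := by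
  obtain ⟨_, hne, hmin⟩ := hM
  exact ((hmin N inferInstance (N_le_of_normal hne)).resolve_left isMinNormal_N.2.1).symm

lemma N_mul_comm (m n : N) : m * n = n * m := by
  obtain ⟨_, v, rfl⟩ := m
  obtain ⟨_, w, rfl⟩ := n
  exact Subtype.ext (by simp only [coe_mul, ← map_mul, mul_comm v w])

noncomputable def quotientNEquiv : G ⧸ N ≃* Q8 :=
  (QuotientGroup.quotientMulEquivOfEq N_eq_ker).trans
    (QuotientGroup.quotientKerEquivOfSurjective _ rightHom_surjective)

lemma isSolvable_G : Group.IsSolvable G :=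
  have := isPGroup_Q8.isNilpotent
  Group.isSolvable_of_ker_le_range inl rightHom range_inl_eq_ker_rightHom.ge

end Q8OnF5Sq

theorem exists_strongly_critical_supersoluble_with_Q8_top :
    ∃ (G : Type) (instG : Group G),
      letI := instG
      Finite G ∧ IsSolvable G ∧
      ∃ (N : Subgroup G) (hN : N.Normal),
        letI := hN
        -- `N` is elementary abelian of order 25
        Nat.card N = 25 ∧ (∀ a b : N, a * b = b * a) ∧
        (∀ n : N, n ≠ 1 → orderOf n = 5) ∧
        -- `N` is the unique minimal normal subgroup of `G`
        IsMinNormal N ∧ (∀ M : Subgroup G, IsMinNormal M → M = N) ∧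
        -- `G / N ≅ Q₈`
        Nonempty ((G ⧸ N) ≃* QuaternionGroup 2) ∧
        -- `G` is not supersoluble, every proper subgroup is supersoluble,
        ¬ IsSupersoluble G ∧
        (∀ H : Subgroup G, H ≠ ⊤ → IsSupersoluble ↥H) ∧
        -- and every quotient by a nontrivial normal subgroup is supersoluble
        (∀ (M : Subgroup G) (hM : M.Normal), M ≠ ⊥ →
          (letI := hM; IsSupersoluble (G ⧸ M))) :=
  ⟨Q8OnF5Sq.G, inferInstance, inferInstance, Q8OnF5Sq.isSolvable_G, Q8OnF5Sq.N, inferInstance,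
    Q8OnF5Sq.card_N, Q8OnF5Sq.N_mul_comm,
    fun n hn => orderOf_eq_prime (Q8OnF5Sq.pow_five_N n) hn, Q8OnF5Sq.isMinNormal_N,
    fun _ => Q8OnF5Sq.eq_N_of_isMinNormal, ⟨Q8OnF5Sq.quotientNEquiv⟩,
    Q8OnF5Sq.not_isSupersoluble, fun _ => Q8OnF5Sq.isSupersoluble_of_ne_top,
    fun _ _ => Q8OnF5Sq.isSupersoluble_quotient⟩
end

section
/- Let G be a finite soluble group possessing a unique minimal normal subgroup N, and let H be a maximal subgroup of G whose normal core in G is trivial (so G is a primitive monolithic soluble group with soc(G) = N). Then for every h ∈ H with h ≠ 1 and every n ∈ N: there exists y ∈ G with ⟨hn, y⟩ = G if and only if there exists k ∈ H with ⟨h, k⟩ = H. -/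
universe u

/-!
Soluble gives `N` abelian; core-freeness of the maximal subgroup `H` makes `H` a complement of `N`
and `N` self-centralizing.

If `⟨h n, y⟩ = G`, write `y = w k` with `w ∈ N`, `k ∈ H`: then `N ⟨h, k⟩ = G` and `⟨h, k⟩ ≤ H`,
so `⟨h, k⟩ = H` by Dedekind's law.

Conversely let `⟨h, k⟩ = H` and suppose no `⟨h n, y⟩` is `G`. For `m ∈ N` the proper subgroup
`⟨h n, k m⟩` supplements `N`, so it is a complement of `N`. In a primitive soluble group all
complements of the socle are conjugate under it, so `⟨h n, k m⟩ = c H c⁻¹` with `c ∈ N`, and then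
`m = k⁻¹ c k c⁻¹` and `n = h⁻¹ c h c⁻¹`. The first equation makes `m ↦ c` injective, so `c` runs
over all of `N`; with `c = 1` the second gives `n = 1`, and then `h` centralizes `N`, forcing
`h ∈ N ∩ H = 1`.
-/

open Subgroup
open scoped Pointwise

theorem Set.Finite.forall_of_surjOn {α : Type*} {S : Set α} (hS : S.Finite) {f : α → α}
    {P : α → Prop} (h : Set.SurjOn f {c ∈ S | P c} S) : ∀ c ∈ S, P c := by
  have hsub : {c ∈ S | P c} ⊆ S := Set.sep_subset _ _
  have hfin : (f '' {c ∈ S | P c}).Finite := (hS.subset hsub).image f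
  have heq : {c ∈ S | P c} = S := Set.eq_of_subset_of_ncard_le hsub
    ((Set.ncard_le_ncard h hfin).trans (Set.ncard_image_le (hS.subset hsub))) hS
  intro c hc
  rw [← heq] at hc
  exact hc.2

namespace Subgroup

variable {G : Type*} [Group G]

theorem sup_inf_assoc_of_le_of_normal_left {A K L : Subgroup G} [A.Normal] (hAL : A ≤ L) :
    (A ⊔ K) ⊓ L = A ⊔ K ⊓ L := by
  refine le_antisymm (fun x ⟨hx, hxL⟩ => ?_)
    (le_inf (sup_le_sup_left inf_le_left A) (sup_le hAL inf_le_right))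
  obtain ⟨a, ha, k, hk, rfl⟩ := mem_sup_of_normal_left.mp hx
  exact mul_mem_sup ha ⟨hk, (mul_mem_cancel_left (hAL ha)).mp hxL⟩

theorem sup_inf_assoc_of_le_of_normal_right {A K L : Subgroup G} [K.Normal] (hAL : A ≤ L) :
    (A ⊔ K) ⊓ L = A ⊔ K ⊓ L := by
  refine le_antisymm (fun x ⟨hx, hxL⟩ => ?_)
    (le_inf (sup_le_sup_left inf_le_left A) (sup_le hAL inf_le_right))
  obtain ⟨a, ha, k, hk, rfl⟩ := mem_sup_of_normal_right.mp hx
  exact mul_mem_sup ha ⟨hk, (mul_mem_cancel_left (hAL ha)).mp hxL⟩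

theorem eq_of_le_of_sup_eq_top_of_inf_eq_bot {N K L : Subgroup G} [N.Normal] (hKL : K ≤ L)
    (hsup : N ⊔ K = ⊤) (hinf : N ⊓ L = ⊥) : K = L := by
  rw [← top_inf_eq L, ← hsup, sup_comm, sup_inf_assoc_of_le_of_normal_right hKL, hinf,
    sup_bot_eq]

theorem normal_of_sup_eq_top {A B P : Subgroup G} (hsup : A ⊔ B = ⊤)
    (hA : A ≤ normalizer (P : Set G)) (hB : B ≤ normalizer (P : Set G)) : P.Normal := by
  rw [← normalizer_eq_top_iff, eq_top_iff, ← hsup]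
  exact sup_le hA hB

theorem le_normalizer_inf_of_normal {A B K : Subgroup G} [A.Normal]
    (hK : K ≤ normalizer (B : Set G)) : K ≤ normalizer ((A ⊓ B : Subgroup G) : Set G) :=
  (le_inf le_normalizer_of_normal hK).trans inf_normalizer_le_normalizer_inf

theorem normalizer_conj_smul (c : G) (P : Subgroup G) :
    normalizer ((MulAut.conj c • P : Subgroup G) : Set G) =
      MulAut.conj c • normalizer (P : Set G) :=
  (map_equiv_normalizer_eq P (MulAut.conj c)).symm

theorem mul_mem_conj_smul_iff {N H : Subgroup G} [N.Normal] (hNH : Disjoint N H) {x a c : G}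
    (hx : x ∈ H) (ha : a ∈ N) (hc : c ∈ N) :
    x * a ∈ MulAut.conj c • H ↔ a = x⁻¹ * c * x * c⁻¹ := by
  have he : x⁻¹ * c⁻¹ * x * a * c ∈ N :=
    mul_mem (mul_mem (‹N.Normal›.conj_mem' _ (inv_mem hc) x) ha) hc
  rw [mem_pointwise_smul_iff_inv_smul_mem, ← map_inv, MulAut.smul_def, MulAut.conj_apply, inv_inv,
    show c⁻¹ * (x * a) * c = x * (x⁻¹ * c⁻¹ * x * a * c) by group, mul_mem_cancel_left hx]
  constructor
  · intro hH
    have h1 : x⁻¹ * c⁻¹ * x * a * c = 1 := disjoint_def.mp hNH he hH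
    calc a = (x⁻¹ * c⁻¹ * x)⁻¹ * (x⁻¹ * c⁻¹ * x * a * c) * c⁻¹ := by group
      _ = x⁻¹ * c * x * c⁻¹ := by rw [h1]; group
  · rintro rfl
    simpa only [show x⁻¹ * c⁻¹ * x * (x⁻¹ * c * x * c⁻¹) * c = 1 by group] using one_mem H

theorem closure_pair_eq_top_iff {H : Subgroup G} (a b : H) :
    closure {a, b} = ⊤ ↔ closure ({(a : G), (b : G)} : Set G) = H := by
  rw [← (map_injective H.subtype_injective).eq_iff, MonoidHom.map_closure,
    ← MonoidHom.range_eq_map, range_subtype, Set.image_pair]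
  rfl

end Subgroup

/-- Two `q`-complements of a normal `p`-subgroup are Sylow subgroups, hence conjugate; the
conjugating element can be taken in `N` because `N` supplements them. -/
theorem exists_conj_smul_eq_of_isPGroup {X : Type*} [Group X] [Finite X] {p q : ℕ}
    [Fact p.Prime] [Fact q.Prime] (hpq : p ≠ q) {N Q₁ Q₂ : Subgroup X} [N.Normal]
    (hN : IsPGroup p N) (hQ₁ : IsPGroup q Q₁) (hQ₂ : IsPGroup q Q₂) (h₁ : N ⊔ Q₁ = ⊤)
    (h₂ : N ⊔ Q₂ = ⊤) : ∃ c ∈ N, Q₂ = MulAut.conj c • Q₁ := by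
  have not_dvd_index : ∀ Q : Subgroup X, IsPGroup q Q → N ⊔ Q = ⊤ → ¬q ∣ Q.index := by
    intro Q hQ hsup hdvd
    have hcompl : IsComplement' N Q := isComplement'_of_disjoint_and_mul_eq_univ
      (hN.disjoint_of_ne p q hpq N Q hQ) (by rw [← normal_mul, hsup, coe_top])
    obtain ⟨k, hk⟩ := IsPGroup.iff_card.mp hN
    rw [hcompl.index_eq_card, hk] at hdvd
    exact hpq ((Nat.prime_dvd_prime_iff_eq Fact.out Fact.out).mp
      (Nat.Prime.dvd_of_dvd_pow Fact.out hdvd)).symm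
  obtain ⟨g, hg⟩ := MulAction.exists_smul_eq X (hQ₁.toSylow (not_dvd_index Q₁ hQ₁ h₁))
    (hQ₂.toSylow (not_dvd_index Q₂ hQ₂ h₂))
  obtain ⟨c, hc, s, hs, rfl⟩ := mem_sup_of_normal_left.mp (h₁ ▸ mem_top g)
  refine ⟨c, hc, ?_⟩
  rw [← IsPGroup.toSylow_coe hQ₂ (not_dvd_index Q₂ hQ₂ h₂), ← hg, Sylow.coe_subgroup_smul,
    map_mul, mul_smul, IsPGroup.toSylow_coe, conj_smul_eq_self_of_mem hs]

theorem exists_conj_smul_inf_eq {G : Type*} [Group G] [Finite G] {p q : ℕ} [Fact p.Prime]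
    [Fact q.Prime] (hpq : p ≠ q) {N R K L : Subgroup G} [N.Normal] (hN : IsPGroup p N) (hNR : N ≤ R)
    (hR : IsPGroup q (R.map (QuotientGroup.mk' N))) (hK : IsCompl N K) (hL : IsCompl N L) :
    ∃ c ∈ N, R ⊓ L = MulAut.conj c • (R ⊓ K) := by
  have trace : ∀ K : Subgroup G, IsCompl N K →
      IsPGroup q ((R ⊓ K).subgroupOf R) ∧ N.subgroupOf R ⊔ (R ⊓ K).subgroupOf R = ⊤ := by
    intro K hK
    refine ⟨fun x => ?_, ?_⟩
    · obtain ⟨j, hj⟩ := hR ⟨_, mem_map_of_mem _ (x : R).2⟩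
      have hxN : ((x : R) : G) ^ q ^ j ∈ N := by
        rw [← QuotientGroup.ker_mk' N, MonoidHom.mem_ker, map_pow]
        exact congrArg Subtype.val hj
      have hx1 : ((x : R) : G) ^ q ^ j = 1 := disjoint_def.mp hK.disjoint hxN (pow_mem x.2.2 _)
      exact ⟨j, Subtype.ext (Subtype.ext hx1)⟩
    · rw [← subgroupOf_sup hNR inf_le_left, ← inf_comm, ← sup_inf_assoc_of_le_of_normal_left hNR,
        hK.sup_eq_top, top_inf_eq, subgroupOf_self]
  obtain ⟨hqK, hsupK⟩ := trace K hK
  obtain ⟨hqL, hsupL⟩ := trace L hL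
  obtain ⟨c, hc, hcL⟩ := exists_conj_smul_eq_of_isPGroup hpq hN.comap_subtype hqK hqL hsupK hsupL
  refine ⟨c, hc, ?_⟩
  have hsub : (R ⊓ L).subgroupOf R = (MulAut.conj (c : G) • (R ⊓ K)).subgroupOf R := by
    rw [← conj_smul_subgroupOf inf_le_left, hcL]
  rwa [subgroupOf_inj, inf_of_le_left inf_le_left,
    inf_of_le_left (conj_smul_le_of_le inf_le_left c)] at hsub

section MinNormal

variable {G : Type u} [Group G] {N : Subgroup G}

theorem exists_isMinNormal_le [Finite G] {W : Subgroup G} (hW : W.Normal) (hne : W ≠ ⊥) :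
    ∃ M, IsMinNormal M ∧ M ≤ W := by
  obtain ⟨M, hMW, ⟨hMn, hMne⟩, hmin⟩ :=
    exists_minimal_le_of_wellFoundedLT (fun M : Subgroup G => M.Normal ∧ M ≠ ⊥) W ⟨hW, hne⟩
  refine ⟨M, ⟨hMn, hMne, fun L hLn hLM => ?_⟩, hMW⟩
  by_cases hL : L = ⊥
  · exact Or.inl hL
  · exact Or.inr (le_antisymm hLM (hmin ⟨hLn, hL⟩ hLM))

namespace IsMinNormal

theorem isMulCommutative [Group.IsSolvable G] (hN : IsMinNormal N) : IsMulCommutative N := by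
  obtain ⟨hNn, hne, hmin⟩ := hN
  have hlt := Group.IsSolvable.commutator_lt_of_ne_bot hne
  have hbot : ⁅N, N⁆ = ⊥ := (hmin _ (commutator_normal N N) hlt.le).resolve_right hlt.ne
  exact le_centralizer_iff_isMulCommutative.mp (commutator_eq_bot_iff_le_centralizer.mp hbot)

/-- A Sylow subgroup of the abelian group `N` is characteristic in `N`, hence normal in `G`. -/
theorem exists_isPGroup [Finite G] (hN : IsMinNormal N) [IsMulCommutative N] :
    ∃ p, p.Prime ∧ IsPGroup p N := by
  obtain ⟨hNn, hne, hmin⟩ := hN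
  obtain ⟨p, hp, hpN⟩ : ∃ p, p.Prime ∧ p ∣ Nat.card N :=
    ⟨_, Nat.minFac_prime (card_eq_one.not.mpr hne), Nat.minFac_dvd _⟩
  have : Fact p.Prime := ⟨hp⟩
  let P : Sylow p N := default
  have : (P : Subgroup N).Characteristic := P.characteristic_of_normal inferInstance
  have hPN : (P : Subgroup N).map N.subtype = N := by
    refine (hmin _ inferInstance (map_subtype_le _)).resolve_left fun hbot => ?_
    rw [map_eq_bot_iff_of_injective _ N.subtype_injective] at hbot
    exact P.ne_bot_of_dvd_card hpN hbot
  exact ⟨p, hp, hPN ▸ P.isPGroup'.map N.subtype⟩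

/-- If `W ⊓ N = ⊥`, then `W` centralizes `N`, so `W ≤ N`. -/
theorem le_of_normal (hN : IsMinNormal N) (hC : centralizer (N : Set G) ≤ N) {W : Subgroup G}
    [W.Normal] (hW : W ≠ ⊥) : N ≤ W := by
  have := hN.1
  rcases hN.2.2 (W ⊓ N) inferInstance inf_le_right with hbot | htop
  · have hWC : W ≤ centralizer (N : Set G) := commutator_eq_bot_iff_le_centralizer.mp
      (le_bot_iff.mp (hbot ▸ commutator_le_inf W N))
    exact absurd (by rw [← inf_eq_left.mpr (hWC.trans hC), hbot]) hW
  · exact htop ▸ inf_le_left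

theorem eq_bot_or_eq_of_le_normalizer (hN : IsMinNormal N) [IsMulCommutative N]
    {K P : Subgroup G} (hsup : N ⊔ K = ⊤) (hPN : P ≤ N) (hK : K ≤ normalizer (P : Set G)) :
    P = ⊥ ∨ P = N :=
  hN.2.2 P (normal_of_sup_eq_top hsup ((le_centralizer_iff.mp
    (hPN.trans (le_centralizer N))).trans (centralizer_le_normalizer _)) hK) hPN

theorem isCompl_of_sup_eq_top (hN : IsMinNormal N) [IsMulCommutative N] {K : Subgroup G}
    (hsup : N ⊔ K = ⊤) (hNK : ¬N ≤ K) : IsCompl N K := by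
  have := hN.1
  refine ⟨disjoint_iff.mpr ?_, codisjoint_iff.mpr hsup⟩
  refine (hN.eq_bot_or_eq_of_le_normalizer hsup inf_le_left
    (le_normalizer_inf_of_normal le_normalizer)).resolve_right fun h => hNK (h ▸ inf_le_right)

theorem isCompl_of_isCoatom [IsMulCommutative N] (hN : IsMinNormal N) {H : Subgroup G}
    (hmax : IsCoatom H) (hcore : ∀ M : Subgroup G, M.Normal → M ≤ H → M = ⊥) : IsCompl N H := by
  have hNH : ¬N ≤ H := fun hle => hN.2.1 (hcore N hN.1 hle)
  exact hN.isCompl_of_sup_eq_top (hmax.2 _ (right_lt_sup.mpr hNH)) hNH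

theorem not_isPGroup_of_lt [Finite G] (hN : IsMinNormal N) (hC : centralizer (N : Set G) ≤ N)
    {p : ℕ} [Fact p.Prime] {R : Subgroup G} [R.Normal] (hNR : N < R) : ¬IsPGroup p R := by
  intro hR
  have : Nontrivial R := (nontrivial_iff_ne_bot R).mpr (ne_bot_of_gt hNR)
  have := hR.center_nontrivial
  have hW : (center R).map R.subtype ≠ ⊥ := by
    rw [Ne, map_eq_bot_iff_of_injective _ R.subtype_injective]
    exact (nontrivial_iff_ne_bot _).mp inferInstance
  have hRC : R ≤ centralizer (N : Set G) := fun r hr n hn => by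
    obtain ⟨z, hz, rfl⟩ := hN.le_of_normal hC hW hn
    exact congrArg Subtype.val (mem_center_iff.mp hz ⟨r, hr⟩).symm
  exact hNR.not_ge (hRC.trans hC)

/-- If `N` normalized `R ⊓ K`, then `R ⊓ K` would be a nontrivial normal subgroup of `G`, hence
contain `N`. -/
theorem normalizer_inf_eq [IsMulCommutative N] (hN : IsMinNormal N)
    (hC : centralizer (N : Set G) ≤ N) {R K : Subgroup G} [R.Normal] (hNR : N < R)
    (hK : IsCompl N K) : normalizer ((R ⊓ K : Subgroup G) : Set G) = K := by
  have := hN.1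
  have hKM : K ≤ normalizer ((R ⊓ K : Subgroup G) : Set G) :=
    le_normalizer_inf_of_normal le_normalizer
  have hD : N ⊓ normalizer ((R ⊓ K : Subgroup G) : Set G) = ⊥ := by
    refine (hN.eq_bot_or_eq_of_le_normalizer hK.sup_eq_top inf_le_left
      (le_normalizer_inf_of_normal (hKM.trans le_normalizer))).resolve_right fun hD => ?_
    have : (R ⊓ K).Normal := normal_of_sup_eq_top hK.sup_eq_top (hD ▸ inf_le_right) hKM
    have hne : R ⊓ K ≠ ⊥ := fun hbot => hNR.ne' <| by
      rw [← top_inf_eq R, ← hK.sup_eq_top, sup_inf_assoc_of_le_of_normal_left hNR.le, inf_comm,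
        hbot, sup_bot_eq]
    exact hN.2.1 (le_bot_iff.mp (disjoint_iff.mp hK.disjoint ▸
      le_inf le_rfl ((hN.le_of_normal hC hne).trans inf_le_right)))
  exact (eq_of_le_of_sup_eq_top_of_inf_eq_bot hKM hK.sup_eq_top hD).symm

/-- Take `R / N` minimal normal in `G / N`, a `q`-group with `q ≠ p`. Each complement `K` of `N` is
the normalizer of `R ⊓ K`, and these traces are `N`-conjugate Sylow subgroups of `R`. -/
theorem exists_conj_smul_eq_of_isCompl [Finite G] [Group.IsSolvable G] (hN : IsMinNormal N)
    (hC : centralizer (N : Set G) ≤ N) {K L : Subgroup G} (hK : IsCompl N K) (hL : IsCompl N L) :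
    ∃ c ∈ N, L = MulAut.conj c • K := by
  have := hN.1
  have := hN.isMulCommutative
  rcases eq_or_ne N ⊤ with rfl | hNtop
  · refine ⟨1, one_mem _, ?_⟩
    rw [map_one, one_smul, ← top_inf_eq K, ← top_inf_eq L, disjoint_iff.mp hK.disjoint,
      disjoint_iff.mp hL.disjoint]
  obtain ⟨p, hp, hpN⟩ := hN.exists_isPGroup
  have : Fact p.Prime := ⟨hp⟩
  have : Nontrivial (G ⧸ N) := QuotientGroup.nontrivial_iff.mpr hNtop
  obtain ⟨T, hT, -⟩ := exists_isMinNormal_le (normal_top (G := G ⧸ N)) top_ne_bot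
  have := hT.1
  have := hT.isMulCommutative
  obtain ⟨q, hq, hqT⟩ := hT.exists_isPGroup
  have : Fact q.Prime := ⟨hq⟩
  set R := T.comap (QuotientGroup.mk' N)
  have hRT : R.map (QuotientGroup.mk' N) = T :=
    map_comap_eq_self_of_surjective (QuotientGroup.mk'_surjective N) T
  have hNR : N < R := by
    refine lt_of_le_of_ne (QuotientGroup.ker_mk' N ▸ MonoidHom.ker_le_comap _ T) fun hNR => ?_
    rw [← hNR, QuotientGroup.map_mk'_self] at hRT
    exact hT.2.1 hRT.symm
  have hpq : p ≠ q := by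
    rintro rfl
    refine hN.not_isPGroup_of_lt hC hNR (hqT.comap_of_ker_isPGroup _ ?_)
    rwa [QuotientGroup.ker_mk']
  obtain ⟨c, hc, hcL⟩ := exists_conj_smul_inf_eq hpq hpN hNR.le (hRT ▸ hqT) hK hL
  refine ⟨c, hc, ?_⟩
  rw [← hN.normalizer_inf_eq hC hNR hL, hcL, normalizer_conj_smul,
    hN.normalizer_inf_eq hC hNR hK]

end IsMinNormal

end MinNormal

section Primitive

variable {G : Type u} [Group G] {N H : Subgroup G}

theorem centralizer_le_of_isCompl [N.Normal] [IsMulCommutative N] (hNH : IsCompl N H)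
    (hcore : ∀ M : Subgroup G, M.Normal → M ≤ H → M = ⊥) : centralizer (N : Set G) ≤ N := by
  have hCH : centralizer (N : Set G) ⊓ H = ⊥ := hcore _ (normal_of_sup_eq_top hNH.sup_eq_top
    ((le_centralizer_iff.mp inf_le_left).trans (centralizer_le_normalizer _))
    (le_normalizer_inf_of_normal le_normalizer)) inf_le_right
  rw [← top_inf_eq (centralizer _), ← hNH.sup_eq_top,
    sup_inf_assoc_of_le_of_normal_left (le_centralizer N), inf_comm, hCH, sup_bot_eq]

theorem exists_closure_pair_eq_of_closure_mul_eq_top [N.Normal] (hNH : IsCompl N H) {h n y : G}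
    (hh : h ∈ H) (hn : n ∈ N) (hy : closure {h * n, y} = ⊤) : ∃ k ∈ H, closure {h, k} = H := by
  obtain ⟨w, hw, k, hk, rfl⟩ := mem_sup_of_normal_left.mp (hNH.sup_eq_top ▸ mem_top y)
  have hh' : h ∈ closure {h, k} := subset_closure (Set.mem_insert _ _)
  have hk' : k ∈ closure {h, k} := subset_closure (Set.mem_insert_of_mem _ rfl)
  refine ⟨k, hk, eq_of_le_of_sup_eq_top_of_inf_eq_bot ?_ ?_ (disjoint_iff.mp hNH.disjoint)⟩
  · exact (closure_le _).mpr (Set.insert_subset_iff.mpr ⟨hh, Set.singleton_subset_iff.mpr hk⟩)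
  · refine eq_top_iff.mpr (hy ▸ (closure_le _).mpr (Set.insert_subset_iff.mpr
      ⟨?_, Set.singleton_subset_iff.mpr ?_⟩))
    · exact mul_mem (mem_sup_right hh') (mem_sup_left hn)
    · exact mul_mem (mem_sup_left hw) (mem_sup_right hk')

theorem exists_closure_mul_eq_top [Finite G] [Group.IsSolvable G] (hN : IsMinNormal N)
    (hC : centralizer (N : Set G) ≤ N) (hNH : IsCompl N H) {h k n : G} (hh : h ∈ H) (hne : h ≠ 1)
    (hk : k ∈ H) (hgen : closure {h, k} = H) (hn : n ∈ N) : ∃ y, closure {h * n, y} = ⊤ := by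
  have := hN.1
  have := hN.isMulCommutative
  by_contra! hno
  have hconj : ∀ m ∈ N, ∃ c ∈ N, n = h⁻¹ * c * h * c⁻¹ ∧ k⁻¹ * c * k * c⁻¹ = m := by
    intro m hm
    set K := closure {h * n, k * m}
    have hhnK : h * n ∈ K := subset_closure (Set.mem_insert _ _)
    have hkmK : k * m ∈ K := subset_closure (Set.mem_insert_of_mem _ rfl)
    have hsup : N ⊔ K = ⊤ := by
      have hhK : h ∈ N ⊔ K := by
        simpa using mul_mem (mem_sup_right hhnK) (mem_sup_left (inv_mem hn) : n⁻¹ ∈ N ⊔ K)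
      have hkK : k ∈ N ⊔ K := by
        simpa using mul_mem (mem_sup_right hkmK) (mem_sup_left (inv_mem hm) : m⁻¹ ∈ N ⊔ K)
      refine eq_top_iff.mpr (hNH.sup_eq_top ▸ sup_le le_sup_left (hgen ▸ (closure_le _).mpr
        (Set.insert_subset_iff.mpr ⟨hhK, Set.singleton_subset_iff.mpr hkK⟩)))
    obtain ⟨c, hc, hKc⟩ := hN.exists_conj_smul_eq_of_isCompl hC hNH
      (hN.isCompl_of_sup_eq_top hsup fun hNK => hno _ (by rw [← hsup, sup_eq_right.mpr hNK]))
    rw [hKc] at hhnK hkmK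
    exact ⟨c, hc, (mul_mem_conj_smul_iff hNH.disjoint hh hn hc).mp hhnK,
      ((mul_mem_conj_smul_iff hNH.disjoint hk hm hc).mp hkmK).symm⟩
  have hall := (N : Set G).toFinite.forall_of_surjOn (f := fun c => k⁻¹ * c * k * c⁻¹)
    (P := fun c => n = h⁻¹ * c * h * c⁻¹) fun m hm => by
      obtain ⟨c, hc, hnc, hmc⟩ := hconj m hm
      exact ⟨c, ⟨hc, hnc⟩, hmc⟩
  have hn1 : n = 1 := by simpa using hall 1 (one_mem N)
  have hhC : h ∈ centralizer (N : Set G) := fun c hc => by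
    have hcomm : h⁻¹ * c * h * c⁻¹ = 1 := (hall c hc).symm.trans hn1
    calc c * h = h * (h⁻¹ * c * h * c⁻¹) * c := by group
      _ = h * c := by rw [hcomm, mul_one]
  exact hne (disjoint_def.mp hNH.disjoint (hC hhC) hh)

end Primitive

theorem generating_pair_in_primitive_monolithic_general
    (G : Type u) [Group G] [Finite G] (hsol : IsSolvable G)
    (N : Subgroup G) (hN : IsMinNormal N)
    (H : Subgroup G) (hmax : IsCoatom H)
    (hcore : ∀ M : Subgroup G, M.Normal → M ≤ H → M = ⊥)
    (h : G) (hh : h ∈ H) (hne : h ≠ 1) (n : G) (hn : n ∈ N) :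
    (∃ y : G, Subgroup.closure {h * n, y} = ⊤) ↔
      (∃ k : ↥H, Subgroup.closure {(⟨h, hh⟩ : ↥H), k} = ⊤) := by
  have : Group.IsSolvable G := hsol
  have := hN.1
  have := hN.isMulCommutative
  have hNH := hN.isCompl_of_isCoatom hmax hcore
  simp only [closure_pair_eq_top_iff]
  constructor
  · rintro ⟨y, hy⟩
    obtain ⟨k, hk, hgen⟩ := exists_closure_pair_eq_of_closure_mul_eq_top hNH hh hn hy
    exact ⟨⟨k, hk⟩, hgen⟩
  · rintro ⟨k, hgen⟩
    exact exists_closure_mul_eq_top hN (centralizer_le_of_isCompl hNH hcore) hNH hh hne k.2 hgen hn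

theorem generating_pair_in_primitive_monolithic
    (G : Type u) [Group G] [Finite G] (hsol : IsSolvable G)
    (N : Subgroup G) (hN : IsMinNormal N)
    (huniq : ∀ M : Subgroup G, IsMinNormal M → M = N)
    (H : Subgroup G) (hmax : IsCoatom H)
    (hcore : ∀ M : Subgroup G, M.Normal → M ≤ H → M = ⊥)
    (h : G) (hh : h ∈ H) (hne : h ≠ 1) (n : G) (hn : n ∈ N) :
    (∃ y : G, Subgroup.closure {h * n, y} = ⊤) ↔
      (∃ k : ↥H, Subgroup.closure {(⟨h, hh⟩ : ↥H), k} = ⊤) :=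
  generating_pair_in_primitive_monolithic_general G hsol N hN H hmax hcore h hh hne n hn
end

section
/- Let G be a finite group and let P be a predicate on subgroups of G that is 2-recognizable in the following sense: for every subgroup K of G, if P(⟨x,y⟩) holds for all x, y ∈ K, then P(K) holds. Let I = {x ∈ G : P(⟨x,y⟩) holds for all y ∈ G}, and suppose I is closed under multiplication and inversion and contains 1 (so it is the underlying set of a subgroup). If there exists g ∈ G such that every element of G can be written as i·gᵏ with i ∈ I and k an integer, then P(G) holds (where G is viewed as the top subgroup of itself). -/
universe u

namespace Subgroup

variable {G : Type*} [Group G]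

theorem closure_pair_mul_zpow (j g : G) (m : ℤ) :
    closure ({g, j * g ^ m} : Set G) = closure {j, g} := by
  have hj : j ∈ closure ({j, g} : Set G) := subset_closure (by simp)
  have hg : g ∈ closure ({j, g} : Set G) := subset_closure (by simp)
  have hg' : g ∈ closure ({g, j * g ^ m} : Set G) := subset_closure (by simp)
  have hjg : j * g ^ m ∈ closure ({g, j * g ^ m} : Set G) := subset_closure (by simp)
  apply le_antisymm <;> rw [closure_le, Set.insert_subset_iff, Set.singleton_subset_iff]
  · exact ⟨hg, mul_mem hj (zpow_mem hg m)⟩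
  · refine ⟨?_, hg'⟩
    simpa using mul_mem hjg (zpow_mem hg' (-m))

end Subgroup

section Isolated

variable {G : Type*} [Group G] (P : Subgroup G → Prop)

def isolatedElements : Set G :=
  {x | ∀ y, P (Subgroup.closure {x, y})}

variable {P}

/-- Writing `y = j * g ^ m` with `j` isolated, `⟨g, y⟩ = ⟨j, g⟩`. -/
theorem mem_isolatedElements_of_forall_eq_mul_zpow {g : G}
    (hgen : ∀ x, ∃ i ∈ isolatedElements P, ∃ k : ℤ, x = i * g ^ k) :
    g ∈ isolatedElements P := by
  intro y
  obtain ⟨j, hj, m, rfl⟩ := hgen y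
  rw [Subgroup.closure_pair_mul_zpow]
  exact hj g

theorem isolatedElements_eq_univ_of_forall_eq_mul_zpow {S : Subgroup G}
    (hS : (S : Set G) = isolatedElements P) {g : G}
    (hgen : ∀ x, ∃ i ∈ S, ∃ k : ℤ, x = i * g ^ k) :
    isolatedElements P = Set.univ := by
  have hg : g ∈ S := by
    rw [← SetLike.mem_coe, hS]
    exact mem_isolatedElements_of_forall_eq_mul_zpow (by simpa [← hS] using hgen)
  rw [← hS, Set.eq_univ_iff_forall]
  intro x
  obtain ⟨i, hi, k, rfl⟩ := hgen x
  exact mul_mem hi (zpow_mem hg k)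

end Isolated

theorem of_isolated_subgroup_and_cyclic_complement_general
    (G : Type u) [Group G] (P : Subgroup G → Prop)
    -- `P` is 2-recognizable
    (h2rec : ∀ K : Subgroup G,
      (∀ x y : G, x ∈ K → y ∈ K → P (Subgroup.closure {x, y})) → P K)
    -- `I` is the set of isolated elements
    (I : Set G) (hI : I = {x : G | ∀ y : G, P (Subgroup.closure {x, y})})
    -- `I` is the underlying set of a subgroup
    (hone : (1 : G) ∈ I)
    (hmul : ∀ a ∈ I, ∀ b ∈ I, a * b ∈ I)
    (hinv : ∀ a ∈ I, a⁻¹ ∈ I)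
    -- `G = I⟨g⟩`
    (g : G) (hgen : ∀ x : G, ∃ i ∈ I, ∃ k : ℤ, x = i * g ^ k) :
    P ⊤ := by
  let S : Subgroup G :=
    { carrier := I
      one_mem' := hone
      mul_mem' := fun {a b} ha hb => hmul a ha b hb
      inv_mem' := fun {a} ha => hinv a ha }
  have hall : isolatedElements P = Set.univ :=
    isolatedElements_eq_univ_of_forall_eq_mul_zpow (S := S) hI hgen
  refine h2rec ⊤ fun x y _ _ => ?_
  have hx : x ∈ isolatedElements P := hall ▸ Set.mem_univ x
  exact hx y

theorem of_isolated_subgroup_and_cyclic_complement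
    (G : Type u) [Group G] [Finite G] (P : Subgroup G → Prop)
    -- `P` is 2-recognizable
    (h2rec : ∀ K : Subgroup G,
      (∀ x y : G, x ∈ K → y ∈ K → P (Subgroup.closure {x, y})) → P K)
    -- `I` is the set of isolated elements
    (I : Set G) (hI : I = {x : G | ∀ y : G, P (Subgroup.closure {x, y})})
    -- `I` is the underlying set of a subgroup
    (hone : (1 : G) ∈ I)
    (hmul : ∀ a ∈ I, ∀ b ∈ I, a * b ∈ I)
    (hinv : ∀ a ∈ I, a⁻¹ ∈ I)
    -- `G = I⟨g⟩`
    (g : G) (hgen : ∀ x : G, ∃ i ∈ I, ∃ k : ℤ, x = i * g ^ k) :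
    P ⊤ :=
  of_isolated_subgroup_and_cyclic_complement_general G P h2rec I hI hone hmul hinv g hgen
end
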